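/- arXiv:2403.04680 — 4 statements merged into one kernel-verified Lean document; each statement's English description precedes it below -/
import Mathlib

section
/- Let T ⊂ R^{n+1} be a nonempty convex set contained in the hyperplane {x : ⟨x, a⟩ = 1}, and define f(x, ℓ) := ℓ − ⟨x, ℓ⟩·a. Suppose x_1, ..., x_T ∈ T and R_1, ..., R_T ∈ cone(T) satisfy ⟨R_t, f(x_t, ℓ)⟩ = 0 for all ℓ ∈ R^{n+1} and all t. Then for every x̂ ∈ T, the regret ∑_{t=1}^T ⟨x_t − x̂, ℓ_t⟩ equals ∑_{t=1}^T ⟨R_t − R̂, f(x_t, ℓ_t)⟩ where R̂ := x̂ ∈ cone(T). -/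
open scoped RealInnerProductSpace

/-- The conic hull `{α • x : x ∈ S, α ≥ 0}`. -/
def coneOf {E : Type*} [AddCommMonoid E] [Module ℝ E] (S : Set E) : Set E :=
  {y | ∃ α : ℝ, 0 ≤ α ∧ ∃ x ∈ S, y = α • x}

section TransformedLoss

variable {E : Type*} [NormedAddCommGroup E] [InnerProductSpace ℝ E]

theorem inner_sub_inner_smul_eq_of_inner_eq_one {a y : E} (hy : ⟪y, a⟫ = 1) (x ℓ : E) :
    ⟪y, ℓ - ⟪x, ℓ⟫ • a⟫ = ⟪y - x, ℓ⟫ := by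
  rw [inner_sub_right, inner_smul_right, hy, mul_one, inner_sub_left]

theorem inner_sub_eq_inner_sub_transformed {a x y R ℓ : E}
    (hR : ⟪R, ℓ - ⟪x, ℓ⟫ • a⟫ = 0) (hy : ⟪y, a⟫ = 1) :
    ⟪x - y, ℓ⟫ = ⟪R - y, ℓ - ⟪x, ℓ⟫ • a⟫ := by
  rw [inner_sub_left R y, hR, inner_sub_inner_smul_eq_of_inner_eq_one hy, zero_sub,
    ← inner_neg_left, neg_sub]

end TransformedLoss

theorem treeplex_regret_eq_cone_regret_general {n : ℕ}
    (a : EuclideanSpace ℝ (Fin (n + 1))) (T : Set (EuclideanSpace ℝ (Fin (n + 1))))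
    (hT : ∀ x ∈ T, ⟪x, a⟫ = 1)
    (N : ℕ) (x R ℓ : Fin N → EuclideanSpace ℝ (Fin (n + 1)))
    (hforce : ∀ t, ∀ l : EuclideanSpace ℝ (Fin (n + 1)), ⟪R t, l - ⟪x t, l⟫ • a⟫ = 0)
    (xhat : EuclideanSpace ℝ (Fin (n + 1))) (hxhat : xhat ∈ T) :
    ∑ t, ⟪x t - xhat, ℓ t⟫ = ∑ t, ⟪R t - xhat, ℓ t - ⟪x t, ℓ t⟫ • a⟫ :=
  Finset.sum_congr rfl fun t _ =>
    inner_sub_eq_inner_sub_transformed (hforce t (ℓ t)) (hT xhat hxhat)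

/-- Regret over `T` equals regret over `cone(T)` against the transformed losses
`f(x, ℓ) = ℓ - ⟨x, ℓ⟩ • a`, with comparator `R̂ = xhat`. -/
theorem treeplex_regret_eq_cone_regret {n : ℕ}
    (a : EuclideanSpace ℝ (Fin (n + 1))) (T : Set (EuclideanSpace ℝ (Fin (n + 1))))
    (hne : T.Nonempty) (hconv : Convex ℝ T)
    (hT : ∀ x ∈ T, ⟪x, a⟫ = 1)
    (N : ℕ) (x R ℓ : Fin N → EuclideanSpace ℝ (Fin (n + 1)))
    (hx : ∀ t, x t ∈ T) (hR : ∀ t, R t ∈ coneOf T)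
    (hforce : ∀ t, ∀ l : EuclideanSpace ℝ (Fin (n + 1)), ⟪R t, l - ⟪x t, l⟫ • a⟫ = 0)
    (xhat : EuclideanSpace ℝ (Fin (n + 1))) (hxhat : xhat ∈ T) :
    ∑ t, ⟪x t - xhat, ℓ t⟫ = ∑ t, ⟪R t - xhat, ℓ t - ⟪x t, ℓ t⟫ • a⟫ :=
  treeplex_regret_eq_cone_regret_general a T hT N x R ℓ hforce xhat hxhat
end

section
/- Let C = cone(T) for T a nonempty compact convex set contained in {x ∈ R^{n+1} : ⟨x, a⟩ = 1} with a = (1, 0, ..., 0), and let Ω = max_{x ∈ T} ‖x‖₂. Then for all R₁, R₂ ∈ C with ⟨R₁, a⟩ > 0 and ⟨R₂, a⟩ > 0: ‖R₁/⟨R₁,a⟩ − R₂/⟨R₂,a⟩‖₂ ≤ Ω · ‖R₁ − R₂‖₂ / max{⟨R₁,a⟩, ⟨R₂,a⟩}. -/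
open scoped RealInnerProductSpace

/-!
Write `r = ⟨R₁, a⟩ ≥ ⟨R₂, a⟩` and `R₂ = α x` with `x ∈ T`, so that `R₂ / ⟨R₂, a⟩ = x`. Then
`R₁ / r - x = r⁻¹ (d - ⟨d, a⟩ x)` with `d = R₁ - R₂`, and `d ↦ d - ⟨d, a⟩ x` is the projection
onto `a^⊥` along `x`. Splitting `d = u + δ a` and `x = a + v` with `u, v ⊥ a`, its value is
`u - δ v`, and Cauchy–Schwarz in `ℝ²` gives `‖u - δ v‖ ≤ ‖u‖ + |δ| ‖v‖ ≤ ‖d‖ ‖x‖ ≤ Ω ‖d‖`.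
-/

section

variable {E : Type*} [NormedAddCommGroup E] [InnerProductSpace ℝ E]

theorem norm_sub_inner_smul_le {a x : E} (ha : ‖a‖ = 1) (hxa : ⟪x, a⟫ = 1) (d : E) :
    ‖d - ⟪d, a⟫ • x‖ ≤ ‖x‖ * ‖d‖ := by
  have haa : ⟪a, a⟫ = 1 := by rw [real_inner_self_eq_norm_sq, ha, one_pow]
  have hCS := real_inner_mul_inner_self_le (d - ⟪d, a⟫ • a) (x - a)
  have hexpand := real_inner_self_eq_norm_sq (d - ⟪d, a⟫ • x)
  simp only [inner_sub_left, inner_sub_right, real_inner_smul_left, real_inner_smul_right,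
    real_inner_comm x a, real_inner_comm d a, real_inner_comm d x, hxa, haa] at hCS hexpand
  refine (pow_le_pow_iff_left₀ (norm_nonneg _) (by positivity) two_ne_zero).mp ?_
  rw [← hexpand, mul_pow, ← real_inner_self_eq_norm_sq, ← real_inner_self_eq_norm_sq]
  nlinarith [sq_nonneg ⟪d, x⟫]

theorem norm_inv_inner_smul_sub_le {a x : E} (ha : ‖a‖ = 1) (hxa : ⟪x, a⟫ = 1) {R : E}
    (hR : 0 < ⟪R, a⟫) (α : ℝ) : ‖(⟪R, a⟫)⁻¹ • R - x‖ ≤ ‖x‖ * ‖R - α • x‖ / ⟪R, a⟫ := by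
  have hproj : (⟪R, a⟫)⁻¹ • R - x = (⟪R, a⟫)⁻¹ • (R - α • x - ⟪R - α • x, a⟫ • x) := by
    have hcancel : R - α • x - (⟪R, a⟫ - α) • x = R - ⟪R, a⟫ • x := by rw [sub_smul]; abel
    rw [inner_sub_left, real_inner_smul_left, hxa, mul_one, hcancel, smul_sub, smul_smul,
      inv_mul_cancel₀ hR.ne', one_smul]
  rw [hproj, norm_smul, Real.norm_of_nonneg (inv_nonneg.mpr hR.le), inv_mul_eq_div]
  exact div_le_div_of_nonneg_right (norm_sub_inner_smul_le ha hxa _) hR.le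

theorem norm_normalize_sub_le_of_mem_coneOf {T : Set E} {a : E} (ha : ‖a‖ = 1)
    (hT : ∀ x ∈ T, ⟪x, a⟫ = 1) {Ω : ℝ} (hΩ : Ω ∈ upperBounds (norm '' T)) {R₁ R₂ : E}
    (h₂ : R₂ ∈ coneOf T) (hp₁ : 0 < ⟪R₁, a⟫) (hp₂ : 0 < ⟪R₂, a⟫) :
    ‖(⟪R₁, a⟫)⁻¹ • R₁ - (⟪R₂, a⟫)⁻¹ • R₂‖ ≤ Ω * ‖R₁ - R₂‖ / ⟪R₁, a⟫ := by
  obtain ⟨α, -, x, hxT, rfl⟩ := h₂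
  have hxa := hT x hxT
  rw [real_inner_smul_left, hxa, mul_one] at hp₂ ⊢
  rw [smul_smul, inv_mul_cancel₀ hp₂.ne', one_smul]
  refine (norm_inv_inner_smul_sub_le ha hxa hp₁ α).trans ?_
  gcongr
  exact hΩ ⟨x, hxT, rfl⟩

end

theorem normalization_lipschitz_on_cone_general {n : ℕ}
    (T : Set (EuclideanSpace ℝ (Fin (n + 1))))
    (a : EuclideanSpace ℝ (Fin (n + 1))) (ha : a = EuclideanSpace.single 0 1)
    (hT : ∀ x ∈ T, ⟪x, a⟫ = 1)
    (Ω : ℝ) (hΩ : IsGreatest (norm '' T) Ω)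
    (R₁ R₂ : EuclideanSpace ℝ (Fin (n + 1)))
    (h₁ : R₁ ∈ coneOf T) (h₂ : R₂ ∈ coneOf T)
    (hp₁ : 0 < ⟪R₁, a⟫) (hp₂ : 0 < ⟪R₂, a⟫) :
    ‖(⟪R₁, a⟫)⁻¹ • R₁ - (⟪R₂, a⟫)⁻¹ • R₂‖ ≤ Ω * ‖R₁ - R₂‖ / max ⟪R₁, a⟫ ⟪R₂, a⟫ := by
  have hna : ‖a‖ = 1 := by simp [ha]
  rcases le_total ⟪R₂, a⟫ ⟪R₁, a⟫ with h | h
  · rw [max_eq_left h]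
    exact norm_normalize_sub_le_of_mem_coneOf hna hT hΩ.2 h₂ hp₁ hp₂
  · rw [max_eq_right h, norm_sub_rev, norm_sub_rev R₁]
    exact norm_normalize_sub_le_of_mem_coneOf hna hT hΩ.2 h₁ hp₂ hp₁

/-- Lipschitz-type estimate for the normalization map `R ↦ R / ⟨R, a⟩` on `cone(T)`. -/
theorem normalization_lipschitz_on_cone {n : ℕ}
    (T : Set (EuclideanSpace ℝ (Fin (n + 1))))
    (hne : T.Nonempty) (hcomp : IsCompact T) (hconv : Convex ℝ T)
    (a : EuclideanSpace ℝ (Fin (n + 1))) (ha : a = EuclideanSpace.single 0 1)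
    (hT : ∀ x ∈ T, ⟪x, a⟫ = 1)
    (Ω : ℝ) (hΩ : IsGreatest (norm '' T) Ω)
    (R₁ R₂ : EuclideanSpace ℝ (Fin (n + 1)))
    (h₁ : R₁ ∈ coneOf T) (h₂ : R₂ ∈ coneOf T)
    (hp₁ : 0 < ⟪R₁, a⟫) (hp₂ : 0 < ⟪R₂, a⟫) :
    ‖(⟪R₁, a⟫)⁻¹ • R₁ - (⟪R₂, a⟫)⁻¹ • R₂‖ ≤ Ω * ‖R₁ - R₂‖ / max ⟪R₁, a⟫ ⟪R₂, a⟫ :=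
  normalization_lipschitz_on_cone_general T a ha hT Ω hΩ R₁ R₂ h₁ h₂ hp₁ hp₂
end

section
/- Let T ⊂ R^{n+1} be nonempty, convex, compact, contained in {x : ⟨x, a⟩ = 1}, with Ω := max_{x ∈ T} ‖x‖₂. Suppose strategies x_1, ..., x_T ∈ T are produced by running online mirror descent (without predictions) on C = cone(T): R_1 = 0, x_t = R_t/⟨R_t, a⟩ (with x_t arbitrary in T if R_t = 0), and R_{t+1} = Π_C(R_t − η f(x_t, ℓ_t)) where f(x, ℓ) = ℓ − ⟨x,ℓ⟩a. If each update additionally satisfies the standard OMD regret bound ∑_t ⟨R_t − R̂, f(x_t,ℓ_t)⟩ ≤ ‖R̂‖₂²/(2η) + (η/2)∑_t ‖f(x_t,ℓ_t)‖₂² for all R̂ ∈ C, then the treeplex regret satisfies max_{x̂∈T} ∑_{t=1}^T ⟨x_t − x̂, ℓ_t⟩ ≤ Ω²/(2η) + (η/2)∑_{t=1}^T ‖f(x_t, ℓ_t)‖₂². -/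
open scoped RealInnerProductSpace

/-- `p` is the Euclidean orthogonal projection of `y` onto `C`. -/
def IsEuclidProj {E : Type*} [NormedAddCommGroup E] (C : Set E) (y p : E) : Prop :=
  p ∈ C ∧ ∀ z ∈ C, ‖p - y‖ ≤ ‖z - y‖

/-!
Since `x_t` is `R_t` rescaled onto the hyperplane `⟪·, a⟫ = 1`, the vector `R_t` is orthogonal
to `f(x_t, ℓ_t) = ℓ_t - ⟪x_t, ℓ_t⟫ a`. Together with `⟪x̂, a⟫ = 1` this turns each term
`⟪x_t - x̂, ℓ_t⟫` of the treeplex regret into the term `⟪R_t - x̂, f(x_t, ℓ_t)⟫` of the cone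
regret against the comparator `x̂ ∈ cone(T)`, whose norm is at most `Ω`.
-/

section

variable {E : Type*} [NormedAddCommGroup E] [InnerProductSpace ℝ E]

theorem self_mem_coneOf {S : Set E} {x : E} (hx : x ∈ S) : x ∈ coneOf S :=
  ⟨1, zero_le_one, x, hx, (one_smul ℝ x).symm⟩

theorem eq_zero_of_mem_coneOf_of_inner_eq_zero {S : Set E} {a R : E}
    (hS : ∀ x ∈ S, ⟪x, a⟫ = 1) (hR : R ∈ coneOf S) (hRa : ⟪R, a⟫ = 0) : R = 0 := by
  obtain ⟨α, -, x, hx, rfl⟩ := hR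
  rw [real_inner_smul_left, hS x hx, mul_one] at hRa
  rw [hRa, zero_smul]

theorem inner_sub_inner_smul_eq_zero_of_eq_inv_smul {a R x : E} (ℓ : E)
    (hRa : ⟪R, a⟫ ≠ 0) (hx : x = ⟪R, a⟫⁻¹ • R) :
    ⟪R, ℓ - ⟪x, ℓ⟫ • a⟫ = 0 := by
  rw [inner_sub_right, real_inner_smul_right, hx, real_inner_smul_left, mul_right_comm,
    inv_mul_cancel₀ hRa, one_mul, sub_self]

theorem inner_sub_eq_inner_sub_inner_smul {a R x xhat : E} (ℓ : E)
    (hxhat : ⟪xhat, a⟫ = 1) (hR : ⟪R, ℓ - ⟪x, ℓ⟫ • a⟫ = 0) :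
    ⟪x - xhat, ℓ⟫ = ⟪R - xhat, ℓ - ⟪x, ℓ⟫ • a⟫ := by
  rw [inner_sub_left _ _ (ℓ - _), hR, inner_sub_left, inner_sub_right, real_inner_smul_right,
    hxhat]
  ring

end

theorem treeplex_regret_bound_from_cone_omd_general {n : ℕ}
    (T : Set (EuclideanSpace ℝ (Fin (n + 1))))
    (a : EuclideanSpace ℝ (Fin (n + 1)))
    (hT : ∀ x ∈ T, ⟪x, a⟫ = 1)
    (Ω : ℝ) (hΩ : IsGreatest (norm '' T) Ω)
    (N : ℕ) (η : ℝ) (hη : 0 < η)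
    (x R ℓ : ℕ → EuclideanSpace ℝ (Fin (n + 1)))
    (hRc : ∀ t, R t ∈ coneOf T)
    (hxt : ∀ t, R t = 0 ∨ x t = (⟪R t, a⟫)⁻¹ • R t)
    (hbound : ∀ Rhat ∈ coneOf T,
      ∑ t ∈ Finset.range N, ⟪R t - Rhat, ℓ t - ⟪x t, ℓ t⟫ • a⟫ ≤
        ‖Rhat‖ ^ 2 / (2 * η) +
          (η / 2) * ∑ t ∈ Finset.range N, ‖ℓ t - ⟪x t, ℓ t⟫ • a‖ ^ 2) :
    ∀ xhat ∈ T,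
      ∑ t ∈ Finset.range N, ⟪x t - xhat, ℓ t⟫ ≤
        Ω ^ 2 / (2 * η) +
          (η / 2) * ∑ t ∈ Finset.range N, ‖ℓ t - ⟪x t, ℓ t⟫ • a‖ ^ 2 := by
  intro xhat hxhat
  have horth (t : ℕ) : ⟪R t, ℓ t - ⟪x t, ℓ t⟫ • a⟫ = 0 := by
    by_cases hRa : ⟪R t, a⟫ = 0
    · rw [eq_zero_of_mem_coneOf_of_inner_eq_zero hT (hRc t) hRa, inner_zero_left]
    · refine inner_sub_inner_smul_eq_zero_of_eq_inv_smul _ hRa ((hxt t).resolve_left ?_)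
      exact fun hR0 => hRa (by rw [hR0, inner_zero_left])
  have hnorm : ‖xhat‖ ^ 2 ≤ Ω ^ 2 :=
    pow_le_pow_left₀ (norm_nonneg _) (hΩ.2 ⟨xhat, hxhat, rfl⟩) 2
  calc ∑ t ∈ Finset.range N, ⟪x t - xhat, ℓ t⟫
      = ∑ t ∈ Finset.range N, ⟪R t - xhat, ℓ t - ⟪x t, ℓ t⟫ • a⟫ :=
        Finset.sum_congr rfl fun t _ =>
          inner_sub_eq_inner_sub_inner_smul _ (hT xhat hxhat) (horth t)
    _ ≤ ‖xhat‖ ^ 2 / (2 * η) +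
          (η / 2) * ∑ t ∈ Finset.range N, ‖ℓ t - ⟪x t, ℓ t⟫ • a‖ ^ 2 :=
        hbound xhat (self_mem_coneOf hxhat)
    _ ≤ Ω ^ 2 / (2 * η) +
          (η / 2) * ∑ t ∈ Finset.range N, ‖ℓ t - ⟪x t, ℓ t⟫ • a‖ ^ 2 := by
        gcongr

/-- Regret bound on the treeplex for online mirror descent run on `cone(T)`:
given the standard OMD regret bound over the cone, the regret over `T` is bounded
by `Ω²/(2η) + (η/2) ∑ ‖f(x_t, ℓ_t)‖²`. -/
theorem treeplex_regret_bound_from_cone_omd {n : ℕ}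
    (T : Set (EuclideanSpace ℝ (Fin (n + 1))))
    (hne : T.Nonempty) (hcomp : IsCompact T) (hconv : Convex ℝ T)
    (a : EuclideanSpace ℝ (Fin (n + 1)))
    (hT : ∀ x ∈ T, ⟪x, a⟫ = 1)
    (Ω : ℝ) (hΩ : IsGreatest (norm '' T) Ω)
    (N : ℕ) (η : ℝ) (hη : 0 < η)
    (x R ℓ : ℕ → EuclideanSpace ℝ (Fin (n + 1)))
    (hx : ∀ t, x t ∈ T) (hRc : ∀ t, R t ∈ coneOf T)
    (hR0 : R 0 = 0)
    (hxt : ∀ t, R t = 0 ∨ x t = (⟪R t, a⟫)⁻¹ • R t)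
    (hupd : ∀ t, IsEuclidProj (coneOf T)
      (R t - η • (ℓ t - ⟪x t, ℓ t⟫ • a)) (R (t + 1)))
    (hbound : ∀ Rhat ∈ coneOf T,
      ∑ t ∈ Finset.range N, ⟪R t - Rhat, ℓ t - ⟪x t, ℓ t⟫ • a⟫ ≤
        ‖Rhat‖ ^ 2 / (2 * η) +
          (η / 2) * ∑ t ∈ Finset.range N, ‖ℓ t - ⟪x t, ℓ t⟫ • a‖ ^ 2) :
    ∀ xhat ∈ T,
      ∑ t ∈ Finset.range N, ⟪x t - xhat, ℓ t⟫ ≤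
        Ω ^ 2 / (2 * η) +
          (η / 2) * ∑ t ∈ Finset.range N, ‖ℓ t - ⟪x t, ℓ t⟫ • a‖ ^ 2 :=
  treeplex_regret_bound_from_cone_omd_general T a hT Ω hΩ N η hη x R ℓ hRc hxt hbound
end

section
/- Let X, Y be nonempty compact convex sets, M a matrix of appropriate dimensions, and suppose both players in self-play satisfy RVU-type regret bounds: Reg₁ ≤ α + β∑_{t=1}^T ‖M(y_t − y_{t-1})‖² − γ∑_{t=1}^T ‖x_t − x_{t-1}‖² and Reg₂ ≤ α + β∑_{t=1}^T ‖Mᵀ(x_t − x_{t-1})‖² − γ∑_{t=1}^T ‖y_t − y_{t-1}‖², where ‖Mv‖ ≤ L‖v‖ and ‖Mᵀu‖ ≤ L‖u‖ for all u, v. If βL² ≤ γ, then Reg₁ + Reg₂ ≤ 2α, and hence the duality gap of the average iterates (x̄_T, ȳ_T) is at most 2α/T. -/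
open scoped RealInnerProductSpace
open Finset

/-!
Adding the two RVU bounds, each player's positive term `β ∑ ‖M Δy‖²` (resp. `β ∑ ‖Mᵀ Δx‖²`)
is dominated by `β L² ∑ ‖Δy‖² ≤ γ ∑ ‖Δy‖²`, the negative term of the other player's bound, so
`Reg₁ + Reg₂ ≤ 2α`. For any comparators `(x̂, ŷ)` the two regrets add up, by adjointness, to
`∑ₜ ⟨xₜ, M ŷ⟩ - ⟨x̂, M yₜ⟩ = T (⟨x̄, M ŷ⟩ - ⟨x̂, M ȳ⟩)`; choosing the maximiser `ŷ` and the
minimiser `x̂` bounds the duality gap by `2α / T`.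
-/

theorem mul_sum_norm_sq_map_le {ι E F : Type*} [SeminormedAddCommGroup E]
    [SeminormedAddCommGroup F] {f : E → F} {L β γ : ℝ} (hf : ∀ v, ‖f v‖ ≤ L * ‖v‖)
    (hβ : 0 ≤ β) (hβγ : β * L ^ 2 ≤ γ) (s : Finset ι) (d : ι → E) :
    β * ∑ i ∈ s, ‖f (d i)‖ ^ 2 ≤ γ * ∑ i ∈ s, ‖d i‖ ^ 2 := by
  have hsq : ∑ i ∈ s, ‖f (d i)‖ ^ 2 ≤ L ^ 2 * ∑ i ∈ s, ‖d i‖ ^ 2 := by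
    rw [mul_sum]
    refine sum_le_sum fun i _ => ?_
    calc ‖f (d i)‖ ^ 2 ≤ (L * ‖d i‖) ^ 2 := pow_le_pow_left₀ (norm_nonneg _) (hf _) 2
      _ = L ^ 2 * ‖d i‖ ^ 2 := mul_pow _ _ _
  calc β * ∑ i ∈ s, ‖f (d i)‖ ^ 2 ≤ β * (L ^ 2 * ∑ i ∈ s, ‖d i‖ ^ 2) :=
        mul_le_mul_of_nonneg_left hsq hβ
    _ = β * L ^ 2 * ∑ i ∈ s, ‖d i‖ ^ 2 := (mul_assoc _ _ _).symm
    _ ≤ γ * ∑ i ∈ s, ‖d i‖ ^ 2 :=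
        mul_le_mul_of_nonneg_right hβγ (sum_nonneg fun i _ => sq_nonneg _)

theorem inner_smul_sum_sub_inner_smul_sum_eq {ι E F : Type*} [NormedAddCommGroup E]
    [InnerProductSpace ℝ E] [NormedAddCommGroup F] [InnerProductSpace ℝ F]
    {M : F →ₗ[ℝ] E} {Mt : E →ₗ[ℝ] F} (hadj : ∀ u v, ⟪u, M v⟫ = ⟪Mt u, v⟫)
    (s : Finset ι) (c : ℝ) (x : ι → E) (y : ι → F) (xhat : E) (yhat : F) :
    ⟪c • ∑ t ∈ s, x t, M yhat⟫ - ⟪xhat, M (c • ∑ t ∈ s, y t)⟫ =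
      c * (∑ t ∈ s, ⟪x t - xhat, M (y t)⟫ + ∑ t ∈ s, ⟪y t - yhat, -(Mt (x t))⟫) := by
  have hstep : ∀ t, ⟪x t - xhat, M (y t)⟫ + ⟪y t - yhat, -(Mt (x t))⟫ =
      ⟪x t, M yhat⟫ - ⟪xhat, M (y t)⟫ := fun t => by
    simp only [inner_sub_left, inner_neg_right, hadj, map_sub, inner_sub_right,
      real_inner_comm (y t), real_inner_comm yhat]
    ring
  rw [← sum_add_distrib, sum_congr rfl fun t _ => hstep t, sum_sub_distrib, map_smul, map_sum,
    real_inner_smul_left, real_inner_smul_right, sum_inner, inner_sum, mul_sub]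

theorem rvu_implies_fast_rate_general {n₁ n₂ : ℕ}
    (X : Set (EuclideanSpace ℝ (Fin n₁))) (Y : Set (EuclideanSpace ℝ (Fin n₂)))
    (M : EuclideanSpace ℝ (Fin n₂) →ₗ[ℝ] EuclideanSpace ℝ (Fin n₁))
    (Mt : EuclideanSpace ℝ (Fin n₁) →ₗ[ℝ] EuclideanSpace ℝ (Fin n₂))
    (hadj : ∀ (u : EuclideanSpace ℝ (Fin n₁)) (v : EuclideanSpace ℝ (Fin n₂)),
      ⟪u, M v⟫ = ⟪Mt u, v⟫)
    (L : ℝ)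
    (hML : ∀ v, ‖M v‖ ≤ L * ‖v‖) (hMtL : ∀ u, ‖Mt u‖ ≤ L * ‖u‖)
    (T : ℕ)
    (x : ℕ → EuclideanSpace ℝ (Fin n₁)) (y : ℕ → EuclideanSpace ℝ (Fin n₂))
    (α β γ : ℝ) (hβ : 0 ≤ β) (hβγ : β * L ^ 2 ≤ γ)
    (Reg₁ Reg₂ : ℝ)
    (hReg₁ : IsGreatest
      {r | ∃ xhat ∈ X, r = ∑ t ∈ Finset.Icc 1 T, ⟪x t - xhat, M (y t)⟫} Reg₁)
    (hReg₂ : IsGreatest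
      {r | ∃ yhat ∈ Y, r = ∑ t ∈ Finset.Icc 1 T, ⟪y t - yhat, -(Mt (x t))⟫} Reg₂)
    (hRVU₁ : Reg₁ ≤ α + β * ∑ t ∈ Finset.Icc 1 T, ‖M (y t - y (t - 1))‖ ^ 2
      - γ * ∑ t ∈ Finset.Icc 1 T, ‖x t - x (t - 1)‖ ^ 2)
    (hRVU₂ : Reg₂ ≤ α + β * ∑ t ∈ Finset.Icc 1 T, ‖Mt (x t - x (t - 1))‖ ^ 2
      - γ * ∑ t ∈ Finset.Icc 1 T, ‖y t - y (t - 1)‖ ^ 2)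
    (xbar : EuclideanSpace ℝ (Fin n₁)) (hxbar : xbar = (T : ℝ)⁻¹ • ∑ t ∈ Finset.Icc 1 T, x t)
    (ybar : EuclideanSpace ℝ (Fin n₂)) (hybar : ybar = (T : ℝ)⁻¹ • ∑ t ∈ Finset.Icc 1 T, y t)
    (gmax gmin : ℝ)
    (hgmax : IsGreatest {r | ∃ yhat ∈ Y, r = ⟪xbar, M yhat⟫} gmax)
    (hgmin : IsLeast {r | ∃ xhat ∈ X, r = ⟪xhat, M ybar⟫} gmin) :
    Reg₁ + Reg₂ ≤ 2 * α ∧ gmax - gmin ≤ 2 * α / T := by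
  have hsum : Reg₁ + Reg₂ ≤ 2 * α := by
    have hMy := mul_sum_norm_sq_map_le hML hβ hβγ (Icc 1 T) fun t => y t - y (t - 1)
    have hMtx := mul_sum_norm_sq_map_le hMtL hβ hβγ (Icc 1 T) fun t => x t - x (t - 1)
    linarith
  refine ⟨hsum, ?_⟩
  obtain ⟨yhat, hyhat, rfl⟩ := hgmax.1
  obtain ⟨xhat, hxhat, rfl⟩ := hgmin.1
  have hReg : ∑ t ∈ Icc 1 T, ⟪x t - xhat, M (y t)⟫ + ∑ t ∈ Icc 1 T, ⟪y t - yhat, -(Mt (x t))⟫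
      ≤ 2 * α := by
    linarith [hReg₁.2 ⟨xhat, hxhat, rfl⟩, hReg₂.2 ⟨yhat, hyhat, rfl⟩]
  rw [hxbar, hybar, inner_smul_sum_sub_inner_smul_sum_eq hadj, div_eq_inv_mul]
  exact mul_le_mul_of_nonneg_left hReg (by positivity)

/-- If both players' regrets satisfy RVU bounds with constants `α, β, γ` and the
operator norms of `M, Mᵀ` are at most `L` with `β L² ≤ γ`, then the sum of regrets
is at most `2α`, and the duality gap of the average iterates is at most `2α/T`. -/
theorem rvu_implies_fast_rate {n₁ n₂ : ℕ}
    (X : Set (EuclideanSpace ℝ (Fin n₁))) (Y : Set (EuclideanSpace ℝ (Fin n₂)))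
    (hXne : X.Nonempty) (hXcomp : IsCompact X) (hXconv : Convex ℝ X)
    (hYne : Y.Nonempty) (hYcomp : IsCompact Y) (hYconv : Convex ℝ Y)
    (M : EuclideanSpace ℝ (Fin n₂) →ₗ[ℝ] EuclideanSpace ℝ (Fin n₁))
    (Mt : EuclideanSpace ℝ (Fin n₁) →ₗ[ℝ] EuclideanSpace ℝ (Fin n₂))
    (hadj : ∀ (u : EuclideanSpace ℝ (Fin n₁)) (v : EuclideanSpace ℝ (Fin n₂)),
      ⟪u, M v⟫ = ⟪Mt u, v⟫)
    (L : ℝ) (hL : 0 ≤ L)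
    (hML : ∀ v, ‖M v‖ ≤ L * ‖v‖) (hMtL : ∀ u, ‖Mt u‖ ≤ L * ‖u‖)
    (T : ℕ) (hT : 0 < T)
    (x : ℕ → EuclideanSpace ℝ (Fin n₁)) (y : ℕ → EuclideanSpace ℝ (Fin n₂))
    (hx : ∀ t, x t ∈ X) (hy : ∀ t, y t ∈ Y)
    (hx0 : x 0 = x 1) (hy0 : y 0 = y 1)
    (α β γ : ℝ) (hβ : 0 ≤ β) (hγ : 0 ≤ γ) (hβγ : β * L ^ 2 ≤ γ)
    (Reg₁ Reg₂ : ℝ)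
    (hReg₁ : IsGreatest
      {r | ∃ xhat ∈ X, r = ∑ t ∈ Finset.Icc 1 T, ⟪x t - xhat, M (y t)⟫} Reg₁)
    (hReg₂ : IsGreatest
      {r | ∃ yhat ∈ Y, r = ∑ t ∈ Finset.Icc 1 T, ⟪y t - yhat, -(Mt (x t))⟫} Reg₂)
    (hRVU₁ : Reg₁ ≤ α + β * ∑ t ∈ Finset.Icc 1 T, ‖M (y t - y (t - 1))‖ ^ 2
      - γ * ∑ t ∈ Finset.Icc 1 T, ‖x t - x (t - 1)‖ ^ 2)
    (hRVU₂ : Reg₂ ≤ α + β * ∑ t ∈ Finset.Icc 1 T, ‖Mt (x t - x (t - 1))‖ ^ 2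
      - γ * ∑ t ∈ Finset.Icc 1 T, ‖y t - y (t - 1)‖ ^ 2)
    (xbar : EuclideanSpace ℝ (Fin n₁)) (hxbar : xbar = (T : ℝ)⁻¹ • ∑ t ∈ Finset.Icc 1 T, x t)
    (ybar : EuclideanSpace ℝ (Fin n₂)) (hybar : ybar = (T : ℝ)⁻¹ • ∑ t ∈ Finset.Icc 1 T, y t)
    (gmax gmin : ℝ)
    (hgmax : IsGreatest {r | ∃ yhat ∈ Y, r = ⟪xbar, M yhat⟫} gmax)
    (hgmin : IsLeast {r | ∃ xhat ∈ X, r = ⟪xhat, M ybar⟫} gmin) :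
    Reg₁ + Reg₂ ≤ 2 * α ∧ gmax - gmin ≤ 2 * α / T :=
  rvu_implies_fast_rate_general X Y M Mt hadj L hML hMtL T x y α β γ hβ hβγ Reg₁ Reg₂ hReg₁ hReg₂
    hRVU₁ hRVU₂ xbar hxbar ybar hybar gmax gmin hgmax hgmin
end
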